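/- arXiv:1408.6218 — 4 statements merged into one kernel-verified Lean document; each statement's English description precedes it below -/
import Mathlib

section
/- For any two real m₁×m₂ matrices A and B such that the column space of A is orthogonal to the column space of B and the row space of A is orthogonal to the row space of B, the nuclear norm is additive: ‖A + B‖₁ = ‖A‖₁ + ‖B‖₁. -/
open Matrix

noncomputable def singularValues {m n : ℕ} (A : Matrix (Fin m) (Fin n) ℝ) : Fin n → ℝ :=
  fun i => Real.sqrt ((show (Aᵀ * A).IsHermitian by simpa using Matrix.isHermitian_conjTranspose_mul_self A).eigenvalues i)

noncomputable def nuclearNorm {m n : ℕ} (A : Matrix (Fin m) (Fin n) ℝ) : ℝ :=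
  ∑ i, singularValues A i

noncomputable def opNorm {m n : ℕ} (A : Matrix (Fin m) (Fin n) ℝ) : ℝ :=
  ⨆ i, singularValues A i

noncomputable def frobNorm {m n : ℕ} (A : Matrix (Fin m) (Fin n) ℝ) : ℝ :=
  Real.sqrt (∑ i, ∑ j, (A i j) ^ 2)

/-!
Write `M = AᴴA` and `N = BᴴB`. Since `AᴴB = 0`, the Gram matrix of `A + B` is `M + N`, and since
`ABᴴ = 0`, `MN = 0`. For positive semidefinite `M`, `XM = 0` forces `X √M = 0` (as `M = √M √Mᴴ`),
so `√M √N = √N √M = 0`, whence `(√M + √N)² = M + N` and `√(M + N) = √M + √N`. The nuclear norm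
of `A` is the trace of `√(AᴴA)`, and the trace is additive.
-/

open scoped MatrixOrder ComplexOrder

namespace Matrix

lemma conjTranspose_mul_self_add {m n R : Type*} [Fintype m] [NonUnitalNonAssocSemiring R]
    [StarRing R] {A B : Matrix m n R} (h : Aᴴ * B = 0) :
    (A + B)ᴴ * (A + B) = Aᴴ * A + Bᴴ * B := by
  have h' : Bᴴ * A = 0 := by
    rw [← conjTranspose_conjTranspose A, ← conjTranspose_mul, h, conjTranspose_zero]
  rw [conjTranspose_add, Matrix.add_mul, Matrix.mul_add, Matrix.mul_add, h, h', add_zero,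
    zero_add]

variable {n 𝕜 : Type*} [Fintype n] [DecidableEq n] [RCLike 𝕜]

lemma IsHermitian.trace_cfc {A : Matrix n n 𝕜} (hA : A.IsHermitian) (f : ℝ → ℝ) :
    (cfc f A).trace = ∑ i, (f (hA.eigenvalues i) : 𝕜) := by
  rw [hA.cfc_eq, IsHermitian.cfc, Unitary.conjStarAlgAut_apply, trace_mul_cycle,
    Unitary.coe_star_mul_self, one_mul, trace_diagonal]
  rfl

lemma PosSemidef.trace_cfcSqrt {A : Matrix n n 𝕜} (hA : A.PosSemidef) :
    (CFC.sqrt A).trace = ∑ i, (√(hA.1.eigenvalues i) : 𝕜) := by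
  rw [CFC.sqrt_eq_real_sqrt A hA.nonneg, cfcₙ_eq_cfc, hA.1.trace_cfc]

lemma conjTranspose_cfcSqrt (A : Matrix n n 𝕜) : (CFC.sqrt A)ᴴ = CFC.sqrt A :=
  (CFC.sqrt_nonneg A).posSemidef.isHermitian

lemma mul_cfcSqrt_eq_zero_iff {A X : Matrix n n 𝕜} (hA : 0 ≤ A) :
    X * CFC.sqrt A = 0 ↔ X * A = 0 := by
  have := mul_self_mul_conjTranspose_eq_zero (CFC.sqrt A) X
  rwa [conjTranspose_cfcSqrt, CFC.sqrt_mul_sqrt_self A hA, Iff.comm] at this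

lemma cfcSqrt_mul_eq_zero_iff {A X : Matrix n n 𝕜} (hA : 0 ≤ A) :
    CFC.sqrt A * X = 0 ↔ A * X = 0 := by
  have := self_mul_conjTranspose_mul_eq_zero (CFC.sqrt A) X
  rwa [conjTranspose_cfcSqrt, CFC.sqrt_mul_sqrt_self A hA, Iff.comm] at this

lemma cfcSqrt_mul_cfcSqrt_eq_zero {A B : Matrix n n 𝕜} (hA : 0 ≤ A) (hB : 0 ≤ B)
    (h : A * B = 0) : CFC.sqrt A * CFC.sqrt B = 0 := by
  rwa [cfcSqrt_mul_eq_zero_iff hA, mul_cfcSqrt_eq_zero_iff hB]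

lemma cfcSqrt_add_of_mul_eq_zero {A B : Matrix n n 𝕜} (hA : 0 ≤ A) (hB : 0 ≤ B)
    (h : A * B = 0) : CFC.sqrt (A + B) = CFC.sqrt A + CFC.sqrt B := by
  have h' : B * A = 0 := by
    rw [← hA.posSemidef.isHermitian.eq, ← hB.posSemidef.isHermitian.eq, ← conjTranspose_mul, h,
      conjTranspose_zero]
  have hsqrt : 0 ≤ CFC.sqrt A + CFC.sqrt B := add_nonneg (CFC.sqrt_nonneg A) (CFC.sqrt_nonneg B)
  rw [CFC.sqrt_eq_iff _ _ (add_nonneg hA hB) hsqrt, Matrix.add_mul, Matrix.mul_add,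
    Matrix.mul_add, CFC.sqrt_mul_sqrt_self A, CFC.sqrt_mul_sqrt_self B,
    cfcSqrt_mul_cfcSqrt_eq_zero hA hB h, cfcSqrt_mul_cfcSqrt_eq_zero hB hA h', add_zero, zero_add]

end Matrix

lemma nuclearNorm_eq_trace_cfcSqrt {m n : ℕ} (A : Matrix (Fin m) (Fin n) ℝ) :
    nuclearNorm A = (CFC.sqrt (Aᵀ * A)).trace := by
  rw [← conjTranspose_eq_transpose_of_trivial,
    PosSemidef.trace_cfcSqrt (posSemidef_conjTranspose_mul_self A)]
  rfl

theorem nuclearNorm_add_of_orthogonal {m₁ m₂ : ℕ} (A B : Matrix (Fin m₁) (Fin m₂) ℝ)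
    (hcol : Aᵀ * B = 0) (hrow : A * Bᵀ = 0) :
    nuclearNorm (A + B) = nuclearNorm A + nuclearNorm B := by
  simp only [nuclearNorm_eq_trace_cfcSqrt, ← conjTranspose_eq_transpose_of_trivial] at hcol hrow ⊢
  have hgram : Aᴴ * A * (Bᴴ * B) = 0 := by
    rw [Matrix.mul_assoc, ← Matrix.mul_assoc A, hrow, Matrix.zero_mul, Matrix.mul_zero]
  rw [conjTranspose_mul_self_add hcol,
    cfcSqrt_add_of_mul_eq_zero (posSemidef_conjTranspose_mul_self A).nonneg
      (posSemidef_conjTranspose_mul_self B).nonneg hgram,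
    trace_add]
end

section
/- Let X be a real m₁×m₂ matrix and let P_X(Y) = P₁·Y·P₂^⊥ + Y·P₂, where P₁ is the orthogonal projection onto the column space of X, P₂ the orthogonal projection onto the row space of X, and P₂^⊥ = I - P₂. Then for any m₁×m₂ matrix Y, ‖P_X(Y)‖₁ ≤ √(2·rank X)·‖Y‖₂, where ‖·‖₁ is the nuclear norm and ‖·‖₂ the Frobenius norm. -/
/-!
The matrix `Z = P₁ Y (1 - P₂) + Y P₂` has rank at most `rank P₁ + rank P₂ = 2 rank X`, and its
Frobenius norm is at most that of `Y`: right multiplication by the complementary projections `P₂`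
and `1 - P₂` splits the squared Frobenius norm of any matrix, and on the two pieces `Z` agrees
with `Y P₂` and with `P₁ (Y (1 - P₂))`. Cauchy–Schwarz over the nonzero singular values gives
`‖A‖₁ ≤ √(rank A) ‖A‖₂` for every `A`, which applied to `Z` yields the bound.
-/
open Matrix

structure IsOrthProjOnto {k : ℕ} (P : Matrix (Fin k) (Fin k) ℝ) (V : Submodule ℝ (Fin k → ℝ)) : Prop where
  symm : Pᵀ = P
  idem : P * P = P
  range : LinearMap.range P.mulVecLin = V

open Finset

namespace Matrix

theorem rank_add_le {K m n : Type*} [Field K] [Fintype n] (A B : Matrix m n K) :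
    (A + B).rank ≤ A.rank + B.rank := by
  rw [rank, rank, rank, mulVecLin_add]
  refine (Submodule.finrank_mono ?_).trans (Submodule.finrank_add_le_finrank_add_finrank _ _)
  rintro _ ⟨v, rfl⟩
  exact Submodule.add_mem_sup (LinearMap.mem_range_self _ v) (LinearMap.mem_range_self _ v)

theorem rank_mul_add_mul_le {K k l m n : Type*} [Field K] [Fintype k] [Fintype l] [Fintype n]
    (A : Matrix m k K) (B : Matrix k n K) (C : Matrix m l K) (D : Matrix l n K) :
    (A * B + C * D).rank ≤ A.rank + D.rank :=
  (rank_add_le _ _).trans (add_le_add (rank_mul_le_left A B) (rank_mul_le_right C D))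

end Matrix

theorem IsOrthProjOnto.rank_eq {k l : ℕ} {P : Matrix (Fin k) (Fin k) ℝ}
    {A : Matrix (Fin k) (Fin l) ℝ} (hP : IsOrthProjOnto P (LinearMap.range A.mulVecLin)) :
    P.rank = A.rank := by
  rw [Matrix.rank, hP.range, Matrix.rank]

theorem IsOrthProjOnto.isStarProjection {k : ℕ} {P : Matrix (Fin k) (Fin k) ℝ}
    {V : Submodule ℝ (Fin k → ℝ)} (hP : IsOrthProjOnto P V) : IsStarProjection P :=
  ⟨hP.idem, by
    rw [IsSelfAdjoint, star_eq_conjTranspose, conjTranspose_eq_transpose_of_trivial, hP.symm]⟩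

theorem IsStarProjection.transpose_eq {R k : Type*} [Fintype k] [Semiring R] [Star R]
    [TrivialStar R] {P : Matrix k k R} (hP : IsStarProjection P) : Pᵀ = P := by
  simpa [star_eq_conjTranspose] using hP.isSelfAdjoint.star_eq

section frobNorm

variable {m n : ℕ}

theorem frobNorm_nonneg (A : Matrix (Fin m) (Fin n) ℝ) : 0 ≤ frobNorm A :=
  Real.sqrt_nonneg _

theorem frobNorm_sq (A : Matrix (Fin m) (Fin n) ℝ) : frobNorm A ^ 2 = ∑ i, ∑ j, A i j ^ 2 :=
  Real.sq_sqrt (by positivity)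

theorem frobNorm_sq_eq_trace_mul_transpose (A : Matrix (Fin m) (Fin n) ℝ) :
    frobNorm A ^ 2 = trace (A * Aᵀ) := by
  rw [frobNorm_sq]
  simp [trace, mul_apply, sq]

theorem frobNorm_transpose (A : Matrix (Fin m) (Fin n) ℝ) : frobNorm Aᵀ = frobNorm A := by
  rw [frobNorm, frobNorm, Finset.sum_comm]
  rfl

theorem frobNorm_sq_eq_trace_transpose_mul (A : Matrix (Fin m) (Fin n) ℝ) :
    frobNorm A ^ 2 = trace (Aᵀ * A) := by
  rw [← frobNorm_transpose, frobNorm_sq_eq_trace_mul_transpose, transpose_transpose]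

theorem frobNorm_mul_sq_add_frobNorm_mul_one_sub_sq {P : Matrix (Fin n) (Fin n) ℝ}
    (hP : IsStarProjection P) (A : Matrix (Fin m) (Fin n) ℝ) :
    frobNorm (A * P) ^ 2 + frobNorm (A * (1 - P)) ^ 2 = frobNorm A ^ 2 := by
  have hgram : ∀ {Q : Matrix (Fin n) (Fin n) ℝ}, IsStarProjection Q →
      A * Q * (A * Q)ᵀ = A * Q * Aᵀ := fun {Q} hQ => by
    rw [transpose_mul, hQ.transpose_eq, Matrix.mul_assoc, ← Matrix.mul_assoc Q,
      hQ.isIdempotentElem.eq, Matrix.mul_assoc]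
  simp only [frobNorm_sq_eq_trace_mul_transpose, hgram hP, hgram hP.one_sub, ← trace_add,
    ← Matrix.add_mul, ← Matrix.mul_add, add_sub_cancel, Matrix.mul_one]

theorem frobNorm_mul_le {P : Matrix (Fin m) (Fin m) ℝ} (hP : IsStarProjection P)
    (A : Matrix (Fin m) (Fin n) ℝ) : frobNorm (P * A) ≤ frobNorm A := by
  rw [← frobNorm_transpose, transpose_mul, hP.transpose_eq, ← frobNorm_transpose A,
    ← sq_le_sq₀ (frobNorm_nonneg _) (frobNorm_nonneg _),
    ← frobNorm_mul_sq_add_frobNorm_mul_one_sub_sq hP Aᵀ]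
  exact le_add_of_nonneg_right (sq_nonneg _)

theorem frobNorm_mul_mul_one_sub_add_mul_le {P₁ : Matrix (Fin m) (Fin m) ℝ}
    {P₂ : Matrix (Fin n) (Fin n) ℝ} (hP₁ : IsStarProjection P₁) (hP₂ : IsStarProjection P₂)
    (Y : Matrix (Fin m) (Fin n) ℝ) :
    frobNorm (P₁ * Y * (1 - P₂) + Y * P₂) ≤ frobNorm Y := by
  set Z := P₁ * Y * (1 - P₂) + Y * P₂
  have hZP₂ : Z * P₂ = Y * P₂ := by
    simp [Z, Matrix.add_mul, Matrix.mul_assoc, hP₂.one_sub_mul_self, hP₂.isIdempotentElem.eq]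
  have hZQ : Z * (1 - P₂) = P₁ * (Y * (1 - P₂)) := by
    simp [Z, Matrix.add_mul, Matrix.mul_assoc, hP₂.mul_one_sub_self,
      hP₂.one_sub.isIdempotentElem.eq]
  rw [← sq_le_sq₀ (frobNorm_nonneg _) (frobNorm_nonneg _),
    ← frobNorm_mul_sq_add_frobNorm_mul_one_sub_sq hP₂ Z,
    ← frobNorm_mul_sq_add_frobNorm_mul_one_sub_sq hP₂ Y, hZP₂, hZQ]
  exact add_le_add le_rfl (pow_le_pow_left₀ (frobNorm_nonneg _) (frobNorm_mul_le hP₁ _) 2)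

end frobNorm

section singularValues

variable {m n : ℕ}

theorem singularValues_sq (A : Matrix (Fin m) (Fin n) ℝ) (hA : (Aᵀ * A).IsHermitian) (i : Fin n) :
    singularValues A i ^ 2 = hA.eigenvalues i :=
  Real.sq_sqrt (eigenvalues_conjTranspose_mul_self_nonneg A i)

theorem sum_singularValues_sq (A : Matrix (Fin m) (Fin n) ℝ) :
    ∑ i, singularValues A i ^ 2 = frobNorm A ^ 2 := by
  have hA : (Aᵀ * A).IsHermitian := by simpa using isHermitian_conjTranspose_mul_self A
  rw [frobNorm_sq_eq_trace_transpose_mul, hA.trace_eq_sum_eigenvalues]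
  simp [singularValues_sq A hA]

theorem card_singularValues_ne_zero (A : Matrix (Fin m) (Fin n) ℝ) :
    #{i | singularValues A i ≠ 0} = A.rank := by
  have hA : (Aᵀ * A).IsHermitian := by simpa using isHermitian_conjTranspose_mul_self A
  rw [← rank_transpose_mul_self, hA.rank_eq_card_non_zero_eigs, Fintype.card_subtype]
  simp only [← singularValues_sq A hA, ne_eq, pow_eq_zero_iff two_ne_zero]

theorem nuclearNorm_le_sqrt_rank_mul_frobNorm (A : Matrix (Fin m) (Fin n) ℝ) :
    nuclearNorm A ≤ √A.rank * frobNorm A := by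
  calc nuclearNorm A = ∑ i with singularValues A i ≠ 0, singularValues A i * 1 := by
        simp [nuclearNorm, Finset.sum_filter_ne_zero]
    _ ≤ √(∑ i with singularValues A i ≠ 0, singularValues A i ^ 2) *
        √(∑ i with singularValues A i ≠ 0, (1 : ℝ) ^ 2) := Real.sum_mul_le_sqrt_mul_sqrt _ _ _
    _ ≤ √(∑ i, singularValues A i ^ 2) * √A.rank := by
        gcongr
        · exact filter_subset _ _
        · simp [card_singularValues_ne_zero]
    _ = √A.rank * frobNorm A := by
        rw [sum_singularValues_sq, Real.sqrt_sq (frobNorm_nonneg A), mul_comm]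

end singularValues

theorem nuclearNorm_proj_le {m₁ m₂ : ℕ} (X Y : Matrix (Fin m₁) (Fin m₂) ℝ)
    (P₁ : Matrix (Fin m₁) (Fin m₁) ℝ) (P₂ : Matrix (Fin m₂) (Fin m₂) ℝ)
    (hP₁ : IsOrthProjOnto P₁ (LinearMap.range X.mulVecLin))
    (hP₂ : IsOrthProjOnto P₂ (LinearMap.range Xᵀ.mulVecLin)) :
    nuclearNorm (P₁ * Y * (1 - P₂) + Y * P₂) ≤ Real.sqrt (2 * X.rank) * frobNorm Y := by
  set Z := P₁ * Y * (1 - P₂) + Y * P₂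
  have hrank : (Z.rank : ℝ) ≤ 2 * X.rank := by
    have := rank_mul_add_mul_le P₁ (Y * (1 - P₂)) Y P₂
    rw [← Matrix.mul_assoc, hP₁.rank_eq, hP₂.rank_eq, rank_transpose] at this
    exact_mod_cast this.trans_eq (two_mul _).symm
  calc nuclearNorm Z ≤ √Z.rank * frobNorm Z := nuclearNorm_le_sqrt_rank_mul_frobNorm Z
    _ ≤ √(2 * X.rank) * frobNorm Y :=
        mul_le_mul (Real.sqrt_le_sqrt hrank)
          (frobNorm_mul_mul_one_sub_add_mul_le hP₁.isStarProjection hP₂.isStarProjection Y)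
          (frobNorm_nonneg Z) (Real.sqrt_nonneg _)
end

section
/- For 2×2 probability parametrizations: if f¹ : ℝ → (0,1) is differentiable and K_γ = inf_{|x|≤γ} (f¹)'(x)²/(8 f¹(x)(1-f¹(x))), then for all x, y with |x| ≤ γ, |y| ≤ γ and x ≠ y, K_γ·(x-y)² ≤ (√f¹(x) - √f¹(y))² + (√(1-f¹(x)) - √(1-f¹(y)))². -/
/-!
Write `θ = arcsin ∘ √ ∘ f`, so that `sin θ = √f` and `cos θ = √(1 - f)`. The right-hand side is
then the squared chord `2 - 2 cos (θ x - θ y)` between two points of the unit circle, while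
`θ' ^ 2 = f' ^ 2 / (4 f (1 - f))` is twice the quantity whose infimum is `Kγ`. The mean value
theorem gives `Kγ (x - y) ^ 2 ≤ (θ x - θ y) ^ 2 / 2`, and since both angles lie in `[0, π/2]`
the arc is short enough for `arc ^ 2 / 2 ≤ chord ^ 2`.
-/

open Real Set

lemma exists_mem_uIcc_sub_eq_mul_sub {g g' : ℝ → ℝ} {x y : ℝ}
    (hg : ∀ t ∈ uIcc x y, HasDerivAt g (g' t) t) :
    ∃ ξ ∈ uIcc x y, g x - g y = g' ξ * (x - y) := by
  have hcont : ContinuousOn g (uIcc x y) := fun t ht => (hg t ht).continuousAt.continuousWithinAt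
  rcases lt_trichotomy x y with hlt | rfl | hlt
  · obtain ⟨ξ, hξ, hslope⟩ := exists_hasDerivAt_eq_slope g g' hlt (uIcc_of_le hlt.le ▸ hcont)
      fun t ht => hg t (Ioo_subset_Icc_self.trans (uIcc_of_le hlt.le).symm.subset ht)
    refine ⟨ξ, (uIcc_of_le hlt.le).symm ▸ Ioo_subset_Icc_self hξ, ?_⟩
    rw [hslope, div_mul_eq_mul_div, eq_div_iff (sub_ne_zero.2 hlt.ne')]
    ring
  · exact ⟨x, left_mem_uIcc, by ring⟩
  · obtain ⟨ξ, hξ, hslope⟩ := exists_hasDerivAt_eq_slope g g' hlt (uIcc_of_ge hlt.le ▸ hcont)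
      fun t ht => hg t (Ioo_subset_Icc_self.trans (uIcc_of_ge hlt.le).symm.subset ht)
    refine ⟨ξ, (uIcc_of_ge hlt.le).symm ▸ Ioo_subset_Icc_self hξ, ?_⟩
    rw [hslope, div_mul_cancel₀ _ (sub_ne_zero.2 hlt.ne')]

lemma sq_div_two_le_sin_sq {u : ℝ} (hu : |u| ≤ 1) : u ^ 2 / 2 ≤ sin u ^ 2 := by
  have hdev := abs_sub_sin_le u
  have hsin : 5 / 6 * |u| ≤ |sin u| := by
    have hcube : |u| ^ 3 ≤ |u| := by
      simpa using pow_le_pow_of_le_one (abs_nonneg u) hu (by norm_num : 1 ≤ 3)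
    linarith [abs_sub_abs_le_abs_sub u (sin u)]
  nlinarith [sq_abs u, sq_abs (sin u), abs_nonneg u]

lemma sq_div_two_le_two_sub_two_cos {Δ : ℝ} (hΔ : |Δ| ≤ 2) : Δ ^ 2 / 2 ≤ 2 - 2 * cos Δ := by
  have hhalf := sq_div_two_le_sin_sq (u := Δ / 2) (by rw [abs_div, abs_two]; linarith)
  rw [sin_sq_eq_half_sub, mul_div_cancel₀ _ two_ne_zero] at hhalf
  linarith

lemma sin_sub_sin_sq_add_cos_sub_cos_sq (a b : ℝ) :
    (sin a - sin b) ^ 2 + (cos a - cos b) ^ 2 = 2 - 2 * cos (a - b) := by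
  rw [cos_sub]
  nlinarith [sin_sq_add_cos_sq a, sin_sq_add_cos_sq b]

lemma sin_arcsin_sqrt {p : ℝ} (hp : p ≤ 1) : sin (arcsin √p) = √p :=
  sin_arcsin (by linarith [sqrt_nonneg p]) (sqrt_le_one.2 hp)

lemma cos_arcsin_sqrt {p : ℝ} (hp : 0 ≤ p) : cos (arcsin √p) = √(1 - p) := by
  rw [cos_arcsin, sq_sqrt hp]

lemma arcsin_sqrt_mem_Icc (p : ℝ) : arcsin √p ∈ Icc 0 (π / 2) :=
  ⟨arcsin_nonneg.2 (sqrt_nonneg p), arcsin_le_pi_div_two _⟩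

lemma hasDerivAt_arcsin_sqrt {f : ℝ → ℝ} {f' t : ℝ} (hf : HasDerivAt f f' t)
    (ht : f t ∈ Ioo 0 1) :
    HasDerivAt (fun s => arcsin √(f s)) (f' / (2 * √(f t * (1 - f t)))) t := by
  have hsqrt : √(f t) < 1 := by simpa using sqrt_lt_sqrt ht.1.le ht.2
  refine ((hasDerivAt_arcsin (by linarith [sqrt_nonneg (f t)]) hsqrt.ne).comp t
    (hf.sqrt ht.1.ne')).congr_deriv ?_
  rw [sq_sqrt ht.1.le, sqrt_mul ht.1.le]
  field_simp

lemma sqrt_sub_sqrt_sq_add_sqrt_one_sub_sub_sq {p q : ℝ} (hp : p ∈ Icc 0 1) (hq : q ∈ Icc 0 1) :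
    (√p - √q) ^ 2 + (√(1 - p) - √(1 - q)) ^ 2 = 2 - 2 * cos (arcsin √p - arcsin √q) := by
  rw [← sin_sub_sin_sq_add_cos_sub_cos_sq, sin_arcsin_sqrt hp.2, sin_arcsin_sqrt hq.2,
    cos_arcsin_sqrt hp.1, cos_arcsin_sqrt hq.1]

theorem Kgamma_hellinger_bound_general (f : ℝ → ℝ) (hf : Differentiable ℝ f)
    (hrange : ∀ x, f x ∈ Set.Ioo (0:ℝ) 1) (γ : ℝ) (Kγ : ℝ)
    (hK : Kγ = ⨅ x : {x : ℝ // |x| ≤ γ},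
      (deriv f x) ^ 2 / (8 * f x * (1 - f x)))
    (x y : ℝ) (hx : |x| ≤ γ) (hy : |y| ≤ γ) :
    Kγ * (x - y) ^ 2 ≤
      (Real.sqrt (f x) - Real.sqrt (f y)) ^ 2 +
        (Real.sqrt (1 - f x) - Real.sqrt (1 - f y)) ^ 2 := by
  obtain ⟨ξ, hξ, hmvt⟩ := exists_mem_uIcc_sub_eq_mul_sub (x := x) (y := y)
    fun t _ => hasDerivAt_arcsin_sqrt (hf t).hasDerivAt (hrange t)
  have hξγ : |ξ| ≤ γ := abs_le.2 (uIcc_subset_Icc (abs_le.1 hx) (abs_le.1 hy) hξ)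
  have hKξ : Kγ ≤ deriv f ξ ^ 2 / (8 * f ξ * (1 - f ξ)) := by
    refine hK ▸ ciInf_le ⟨0, ?_⟩ (⟨ξ, hξγ⟩ : {x : ℝ // |x| ≤ γ})
    rintro _ ⟨t, rfl⟩
    have hft := hrange t
    exact div_nonneg (sq_nonneg _) (by nlinarith [hft.1, hft.2])
  have hfξ := hrange ξ
  have hθ := fun t => arcsin_sqrt_mem_Icc (f t)
  rw [sqrt_sub_sqrt_sq_add_sqrt_one_sub_sub_sq (Ioo_subset_Icc_self (hrange x))
    (Ioo_subset_Icc_self (hrange y))]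
  calc Kγ * (x - y) ^ 2 ≤ deriv f ξ ^ 2 / (8 * f ξ * (1 - f ξ)) * (x - y) ^ 2 := by gcongr
    _ = (arcsin √(f x) - arcsin √(f y)) ^ 2 / 2 := by
      rw [hmvt, mul_pow, div_pow, mul_pow, sq_sqrt (mul_nonneg hfξ.1.le (sub_nonneg.2 hfξ.2.le))]
      field_simp
      ring
    _ ≤ _ := sq_div_two_le_two_sub_two_cos <| abs_le.2
      ⟨by linarith [(hθ x).1, (hθ y).2, pi_le_four], by linarith [(hθ x).2, (hθ y).1, pi_le_four]⟩

theorem Kgamma_hellinger_bound (f : ℝ → ℝ) (hf : Differentiable ℝ f)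
    (hrange : ∀ x, f x ∈ Set.Ioo (0:ℝ) 1) (γ : ℝ) (hγ : 0 < γ) (Kγ : ℝ)
    (hK : Kγ = ⨅ x : {x : ℝ // |x| ≤ γ},
      (deriv f x) ^ 2 / (8 * f x * (1 - f x)))
    (x y : ℝ) (hx : |x| ≤ γ) (hy : |y| ≤ γ) (hxy : x ≠ y) :
    Kγ * (x - y) ^ 2 ≤
      (Real.sqrt (f x) - Real.sqrt (f y)) ^ 2 +
        (Real.sqrt (1 - f x) - Real.sqrt (1 - f y)) ^ 2 :=
  Kgamma_hellinger_bound_general f hf hrange γ Kγ hK x y hx hy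
end

section
/- Bound on the KL divergence between the binomial observation models at parameters γ and (1-κ)γ in terms of the link function: if f¹ : ℝ → (0,1) is differentiable with (f¹)' decreasing on ℝ₊, then for 0 < κ ≤ 1 and γ > 0, k(f¹(γ), f¹((1-κ)γ)) ≤ 8(κγ)²·g((1-κ)γ), where k(x,y) = x log(x/y) + (1-x)log((1-x)/(1-y)) and g(x) = (f¹)'(x)²/(8 f¹(x)(1-f¹(x))). -/
/-!
Bounding each logarithm by `log t ≤ t - 1` dominates the binary KL divergence `k(x, y)` by the
χ²-divergence `(x - y)² / (y (1 - y))`. By the mean value theorem `f¹(γ) - f¹((1 - κ)γ)` is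
`κγ` times a value of `(f¹)'` on `[(1 - κ)γ, γ]`, which lies in `[0, (f¹)'((1 - κ)γ)]` because
`(f¹)'` is nonnegative and decreasing there.
-/

open Real Set

theorem mul_log_div_le_mul_div_sub_one {x y : ℝ} (hx : 0 ≤ x) (hy : 0 < y) :
    x * log (x / y) ≤ x * (x / y - 1) := by
  rcases hx.eq_or_lt with rfl | hx
  · simp
  · exact mul_le_mul_of_nonneg_left (log_le_sub_one_of_pos (by positivity)) hx.le

theorem binary_kl_le_chi_sq {x y : ℝ} (hx : x ∈ Icc (0 : ℝ) 1) (hy : y ∈ Ioo (0 : ℝ) 1) :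
    x * log (x / y) + (1 - x) * log ((1 - x) / (1 - y)) ≤ (x - y) ^ 2 / (y * (1 - y)) := by
  obtain ⟨hx0, hx1⟩ := hx
  obtain ⟨hy0, hy1⟩ := hy
  have hy1' : 0 < 1 - y := sub_pos.mpr hy1
  calc x * log (x / y) + (1 - x) * log ((1 - x) / (1 - y))
      ≤ x * (x / y - 1) + (1 - x) * ((1 - x) / (1 - y) - 1) :=
        add_le_add (mul_log_div_le_mul_div_sub_one hx0 hy0)
          (mul_log_div_le_mul_div_sub_one (sub_nonneg.mpr hx1) hy1')
    _ = (x - y) ^ 2 / (y * (1 - y)) := by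
        field_simp
        ring

theorem sq_sub_le_of_deriv_antitoneOn {f : ℝ → ℝ} {a b : ℝ} (hab : a ≤ b)
    (hf : ∀ x ∈ Icc a b, DifferentiableAt ℝ f x)
    (hderiv_nonneg : ∀ x ∈ Icc a b, 0 ≤ deriv f x)
    (hderiv_anti : AntitoneOn (deriv f) (Icc a b)) :
    (f b - f a) ^ 2 ≤ deriv f a ^ 2 * (b - a) ^ 2 := by
  have hbound : ∀ x ∈ Icc a b, ‖deriv f x‖ ≤ deriv f a := fun x hx => by
    rw [Real.norm_of_nonneg (hderiv_nonneg x hx)]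
    exact hderiv_anti (left_mem_Icc.mpr hab) hx hx.1
  have h := (convex_Icc a b).norm_image_sub_le_of_norm_deriv_le hf hbound
    (left_mem_Icc.mpr hab) (right_mem_Icc.mpr hab)
  rw [Real.norm_eq_abs, Real.norm_of_nonneg (sub_nonneg.mpr hab)] at h
  rw [← mul_pow, ← sq_abs]
  exact pow_le_pow_left₀ (abs_nonneg _) h 2

theorem kl_bound_link (f : ℝ → ℝ) (hf : Differentiable ℝ f)
    (hrange : ∀ x, f x ∈ Set.Ioo (0:ℝ) 1)
    (hderiv_nonneg : ∀ x : ℝ, 0 ≤ x → 0 ≤ deriv f x)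
    (hderiv_anti : ∀ x y : ℝ, 0 ≤ x → x ≤ y → deriv f y ≤ deriv f x)
    (γ κ : ℝ) (hγ : 0 < γ) (hκ : κ ∈ Set.Ioc (0:ℝ) 1) :
    f γ * Real.log (f γ / f ((1 - κ) * γ)) +
        (1 - f γ) * Real.log ((1 - f γ) / (1 - f ((1 - κ) * γ))) ≤
      8 * (κ * γ) ^ 2 *
        ((deriv f ((1 - κ) * γ)) ^ 2 /
          (8 * f ((1 - κ) * γ) * (1 - f ((1 - κ) * γ)))) := by
  obtain ⟨hκ0, hκ1⟩ := hκ
  set a := (1 - κ) * γ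
  have ha0 : 0 ≤ a := mul_nonneg (sub_nonneg.mpr hκ1) hγ.le
  have hγa : γ - a = κ * γ := by ring
  have haγ : a ≤ γ := by linarith [mul_pos hκ0 hγ]
  obtain ⟨hfa0, hfa1⟩ := hrange a
  have hvar : 0 < f a * (1 - f a) := mul_pos hfa0 (sub_pos.mpr hfa1)
  have hsq : (f γ - f a) ^ 2 ≤ deriv f a ^ 2 * (γ - a) ^ 2 :=
    sq_sub_le_of_deriv_antitoneOn haγ (fun x _ => hf x)
      (fun x hx => hderiv_nonneg x (ha0.trans hx.1))
      (fun x hx _ _ hxy => hderiv_anti x _ (ha0.trans hx.1) hxy)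
  calc _ ≤ (f γ - f a) ^ 2 / (f a * (1 - f a)) :=
        binary_kl_le_chi_sq (Ioo_subset_Icc_self (hrange γ)) (hrange a)
    _ ≤ deriv f a ^ 2 * (γ - a) ^ 2 / (f a * (1 - f a)) :=
        div_le_div_of_nonneg_right hsq hvar.le
    _ = _ := by
        rw [hγa]
        field_simp
end
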